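/- arXiv:0910.2454 — 2 statements merged into one kernel-verified Lean document; each statement's English description precedes it below -/
import Mathlib

section
/- Let α: ℝ^d → ℝ be a Borel measurable function, let T₁ be a *-endomorphism of 𝒜, and define T: 𝒜 → 𝒜 by (Tf)(x) := e^{iα(x)} (T₁f)(x). Then ⟨(Tf)^k, (Tg)^k⟩ = ⟨f^k, g^k⟩ for all integers k ≥ 1 and all f,g ∈ 𝒜; consequently S_n(Tf,Tg) = S_n(f,g) for all n ≥ 0 and f,g ∈ 𝒜, and K(Tf,Tg) = K(f,g) whenever ∥f∥_∞ < 1/2 and ∥g∥_∞ < 1/2. (This says that the quadratic second quantization Γ₂(T) is an isometry of the quadratic Fock space.) -/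
open MeasureTheory Complex Finset
open scoped Nat ENNReal

noncomputable section

/-- The domain `ℝ^d`. -/
abbrev Dom (d : ℕ) := Fin d → ℝ

/-- Membership in `𝒜 = L²(ℝ^d) ∩ L^∞(ℝ^d)`. -/
def MemA (d : ℕ) (f : Dom d → ℂ) : Prop :=
  MemLp f 2 (volume : Measure (Dom d)) ∧ MemLp f ⊤ (volume : Measure (Dom d))

/-- `⟨f^k, g^k⟩`, the power inner products. -/
def pip (d : ℕ) (f g : Dom d → ℂ) (k : ℕ) : ℂ :=
  ∫ x : Dom d, (starRingEnd ℂ) (f x) ^ k * g x ^ k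

/-- `S_n(f,g)`, the inner product of quadratic `n`-particle vectors. -/
def Sker (c : ℝ) (d : ℕ) (f g : Dom d → ℂ) (n : ℕ) : ℂ :=
  ∑ p : Nat.Partition n,
    (n ! : ℂ) ^ 2 * 2 ^ (2 * n - 1) *
      ∏ j ∈ p.parts.toFinset,
        (c : ℂ) ^ p.parts.count j /
            (((p.parts.count j)! : ℂ) * (j : ℂ) ^ p.parts.count j) *
          pip d f g j ^ p.parts.count j

/-- `K(f,g) = ⟨Ψ(f),Ψ(g)⟩`, the inner product of quadratic exponential vectors. -/
def Kker (c : ℝ) (d : ℕ) (f g : Dom d → ℂ) : ℂ :=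
  Complex.exp (-(c / 2 : ℂ) *
    ∫ x : Dom d, Complex.log (1 - 4 * (starRingEnd ℂ) (f x) * g x))


/-- A `*`-endomorphism of the Hilbert algebra `𝒜 = L²(ℝ^d) ∩ L^∞(ℝ^d)`: a linear map
of `𝒜` into itself (well defined on a.e.-equivalence classes) preserving the `L²` inner
product, pointwise multiplication and conjugation. -/
structure IsStarEndo (d : ℕ) (T₁ : (Dom d → ℂ) → (Dom d → ℂ)) : Prop where
  mem : ∀ f, MemA d f → MemA d (T₁ f)
  ae_eq : ∀ f g, MemA d f → MemA d g → f =ᵐ[(volume : Measure (Dom d))] g →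
    T₁ f =ᵐ[(volume : Measure (Dom d))] T₁ g
  add : ∀ f g, MemA d f → MemA d g →
    T₁ (f + g) =ᵐ[(volume : Measure (Dom d))] T₁ f + T₁ g
  smul : ∀ (a : ℂ) (f : Dom d → ℂ), MemA d f →
    T₁ (a • f) =ᵐ[(volume : Measure (Dom d))] a • T₁ f
  inner : ∀ f g, MemA d f → MemA d g →
    ∫ x : Dom d, (starRingEnd ℂ) (T₁ f x) * T₁ g x =
      ∫ x : Dom d, (starRingEnd ℂ) (f x) * g x
  mul : ∀ f g, MemA d f → MemA d g →
    T₁ (f * g) =ᵐ[(volume : Measure (Dom d))] T₁ f * T₁ g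
  star : ∀ f, MemA d f →
    T₁ (fun x => (starRingEnd ℂ) (f x)) =ᵐ[(volume : Measure (Dom d))]
      fun x => (starRingEnd ℂ) (T₁ f x)

/-!
Multiplicativity turns `⟨(T₁f)^k, (T₁g)^k⟩` into `⟨T₁(f^k), T₁(g^k)⟩`, which the isometry
property identifies with `⟨f^k, g^k⟩`, and the phase `e^{iα}` cancels pointwise against its
conjugate. `S_n` is a polynomial in these power inner products, and for `‖f‖_∞, ‖g‖_∞ < 1/2`
the integral in `K` is a power series in them: integrating `log (1 - w) = -∑ wⁿ/n` termwise gives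
`K(f,g) = exp ((c/2) ∑ 4ⁿ ⟨fⁿ,gⁿ⟩/n)`. Termwise integration needs `|4 conj(T₁f) T₁g| < 1`,
i.e. `‖T₁f‖_∞ ≤ ‖f‖_∞`; this holds because `T₁` preserves every `L^{2k}` norm (take `f = g`
above), and Markov's inequality at exponent `2k` gives `μ {|T₁f| ≥ s} ≤ C (‖f‖_∞ / s)^{2k} → 0`
for every `s > ‖f‖_∞`.
-/

open scoped NNReal

section
variable {X : Type*} [MeasurableSpace X] {μ : Measure X}

theorem lintegral_enorm_sq_eq_ofReal_re_integral {u : X → ℂ} (hu : MemLp u 2 μ) :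
    ∫⁻ x, ‖u x‖ₑ ^ 2 ∂μ = ENNReal.ofReal (∫ x, starRingEnd ℂ (u x) * u x ∂μ).re := by
  simp_rw [conj_mul', ← ofReal_pow, integral_complex_ofReal, ofReal_re]
  rw [ofReal_integral_eq_lintegral_ofReal (hu.integrable_norm_pow two_ne_zero)
    (ae_of_all _ fun x => by positivity)]
  refine lintegral_congr fun x => ?_
  rw [ENNReal.ofReal_pow (norm_nonneg _), ofReal_norm]

theorem eLpNorm_top_le_of_lintegral_pow_le {E F : Type*} [NormedAddCommGroup E]
    [NormedAddCommGroup F] {f : X → E} {g : X → F} (hg : AEStronglyMeasurable g μ) {p : ℕ}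
    (hp : p ≠ 0) (hf : ∫⁻ x, ‖f x‖ₑ ^ p ∂μ ≠ ∞)
    (hmom : ∀ k, ∫⁻ x, ‖g x‖ₑ ^ (p * k + p) ∂μ ≤ ∫⁻ x, ‖f x‖ₑ ^ (p * k + p) ∂μ) :
    eLpNorm g ⊤ μ ≤ eLpNorm f ⊤ μ := by
  set R := eLpNorm f ⊤ μ
  set C := ∫⁻ x, ‖f x‖ₑ ^ p ∂μ
  refine le_of_forall_gt_imp_ge_of_dense fun s hRs => ?_
  obtain rfl | hs := eq_or_ne s ∞
  · exact le_top
  have hs0 : s ≠ 0 := (hRs.trans_le' zero_le).ne'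
  have hR : R ≠ ∞ := hRs.ne_top
  have hmarkov : ∀ k, s ^ (p * k + p) * μ {x | s ≤ ‖g x‖ₑ} ≤ R ^ (p * k) * C := by
    intro k
    calc s ^ (p * k + p) * μ {x | s ≤ ‖g x‖ₑ}
        ≤ s ^ (p * k + p) * μ {x | s ^ (p * k + p) ≤ ‖g x‖ₑ ^ (p * k + p)} :=
          mul_le_mul' le_rfl (measure_mono fun x (hx : s ≤ ‖g x‖ₑ) => pow_le_pow_left' hx _)
      _ ≤ ∫⁻ x, ‖g x‖ₑ ^ (p * k + p) ∂μ := mul_meas_ge_le_lintegral₀ (hg.enorm.pow_const _) _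
      _ ≤ ∫⁻ x, ‖f x‖ₑ ^ (p * k + p) ∂μ := hmom k
      _ ≤ ∫⁻ x, R ^ (p * k) * ‖f x‖ₑ ^ p ∂μ := by
          refine lintegral_mono_ae ((ae_le_eLpNormEssSup (f := f) (μ := μ)).mono fun x hx => ?_)
          rw [pow_add]
          exact mul_le_mul' (pow_le_pow_left' (hx.trans_eq eLpNorm_exponent_top.symm) _) le_rfl
      _ = R ^ (p * k) * C := lintegral_const_mul' _ _ (ENNReal.pow_ne_top hR)
  have hnull : μ {x | s ≤ ‖g x‖ₑ} = 0 := by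
    have hε : C * s⁻¹ ^ p ≠ ∞ :=
      ENNReal.mul_ne_top hf (ENNReal.pow_ne_top (ENNReal.inv_ne_top.2 hs0))
    have hr : R * s⁻¹ < 1 := by
      rwa [← div_eq_mul_inv, ENNReal.div_lt_iff (Or.inl hs0) (Or.inl hs), one_mul]
    refine ENNReal.eq_zero_of_le_mul_pow (r := (R * s⁻¹) ^ p) (ε := (C * s⁻¹ ^ p).toNNReal)
      (pow_lt_one₀ zero_le hr hp) fun k => ?_
    rw [ENNReal.coe_toNNReal hε]
    calc μ {x | s ≤ ‖g x‖ₑ} = (s * s⁻¹) ^ (p * k + p) * μ {x | s ≤ ‖g x‖ₑ} := by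
          rw [ENNReal.mul_inv_cancel hs0 hs, one_pow, one_mul]
      _ = s ^ (p * k + p) * μ {x | s ≤ ‖g x‖ₑ} * s⁻¹ ^ (p * k + p) := by ring
      _ ≤ R ^ (p * k) * C * s⁻¹ ^ (p * k + p) := mul_le_mul' (hmarkov k) le_rfl
      _ = C * s⁻¹ ^ p * ((R * s⁻¹) ^ p) ^ k := by ring
  rw [eLpNorm_exponent_top]
  refine eLpNormEssSup_le_of_ae_enorm_bound (measure_eq_zero_iff_ae_notMem.1 hnull |>.mono
    fun x hx => ?_)
  simpa using (not_le.1 hx).le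

theorem integral_log_one_sub_eq_neg_tsum {w : X → ℂ} (hw : Integrable w μ) {ρ : ℝ≥0}
    (hρ : ρ < 1) (hb : ∀ᵐ x ∂μ, ‖w x‖ ≤ ρ) :
    ∫ x, log (1 - w x) ∂μ = -∑' n : ℕ, (∫ x, w x ^ n ∂μ) / n := by
  have hbound : ∀ n : ℕ, ∀ᵐ x ∂μ, ‖w x ^ (n + 1) / (n + 1 : ℕ)‖ ≤ ρ ^ n * ‖w x‖ := by
    intro n
    filter_upwards [hb] with x hx
    rw [norm_div, norm_pow, pow_succ, Complex.norm_natCast]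
    refine div_le_of_le_mul₀ (by positivity) (by positivity) ?_
    have : (1 : ℝ) ≤ (n + 1 : ℕ) := by exact_mod_cast Nat.succ_pos n
    calc ‖w x‖ ^ n * ‖w x‖ ≤ ρ ^ n * ‖w x‖ := by gcongr
      _ ≤ ρ ^ n * ‖w x‖ * (n + 1 : ℕ) := le_mul_of_one_le_right (by positivity) this
  have hmeas : ∀ n : ℕ, AEStronglyMeasurable (fun x => w x ^ n / n) μ := fun n => by fun_prop
  have hint : ∀ n : ℕ, Integrable (fun x => w x ^ n / n) μ := by
    rintro (_ | n)
    · simp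
    · exact (hw.norm.const_mul _).mono' (hmeas _) (hbound n)
  have hsum : Summable fun n : ℕ => ∫ x, ‖w x ^ n / n‖ ∂μ := by
    rw [← summable_nat_add_iff 1]
    refine Summable.of_nonneg_of_le (fun n => integral_nonneg fun x => norm_nonneg _)
      (fun n => (integral_mono_ae (hint _).norm (hw.norm.const_mul _) (hbound n)).trans_eq
        (integral_const_mul _ _)) ((summable_geometric_of_lt_one ρ.2 hρ).mul_right _)
  calc ∫ x, log (1 - w x) ∂μ = ∫ x, -∑' n : ℕ, w x ^ n / n ∂μ := by
        refine integral_congr_ae (hb.mono fun x hx => ?_)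
        dsimp only
        rw [(hasSum_taylorSeries_neg_log (hx.trans_lt hρ)).tsum_eq, neg_neg]
    _ = -∑' n : ℕ, (∫ x, w x ^ n ∂μ) / n := by
        rw [integral_neg, ← integral_tsum_of_summable_integral_norm hint hsum]
        simp_rw [integral_div]

theorem ae_norm_le_of_eLpNorm_top_le {E : Type*} [NormedAddCommGroup E] {f : X → E} {r : ℝ≥0}
    (h : eLpNorm f ⊤ μ ≤ r) : ∀ᵐ x ∂μ, ‖f x‖ ≤ r :=
  (ae_le_eLpNormEssSup (f := f) (μ := μ)).mono fun x hx => by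
    have := hx.trans ((eLpNorm_exponent_top (f := f) (μ := μ)).symm.trans_le h)
    rw [enorm_le_coe] at this
    exact_mod_cast this

theorem integral_log_one_sub_four_conj_mul_eq_neg_tsum {f g : X → ℂ} (hf : MemLp f 2 μ)
    (hg : MemLp g 2 μ) {r s : ℝ≥0} (hfr : ∀ᵐ x ∂μ, ‖f x‖ ≤ r) (hgs : ∀ᵐ x ∂μ, ‖g x‖ ≤ s)
    (hrs : 4 * r * s < 1) :
    ∫ x, log (1 - 4 * starRingEnd ℂ (f x) * g x) ∂μ =
      -∑' n : ℕ, 4 ^ n * (∫ x, starRingEnd ℂ (f x) ^ n * g x ^ n ∂μ) / n := by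
  have hint : Integrable (fun x => 4 * starRingEnd ℂ (f x) * g x) μ := by
    simpa [mul_assoc] using (hf.star.integrable_mul hg).const_mul 4
  have hb : ∀ᵐ x ∂μ, ‖4 * starRingEnd ℂ (f x) * g x‖ ≤ (4 * r * s : ℝ≥0) := by
    filter_upwards [hfr, hgs] with x hx hy
    rw [norm_mul, norm_mul, RCLike.norm_conj, Complex.norm_ofNat]
    push_cast
    gcongr
  rw [integral_log_one_sub_eq_neg_tsum hint hrs hb]
  congr 1
  refine tsum_congr fun n => ?_
  rw [← integral_const_mul]
  simp_rw [mul_pow, mul_assoc]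

end

theorem conj_exp_I_mul_mul_exp_I_mul (θ : ℝ) (a b : ℂ) :
    starRingEnd ℂ (exp (I * θ) * a) * (exp (I * θ) * b) = starRingEnd ℂ a * b := by
  have h : starRingEnd ℂ (exp (I * θ)) * exp (I * θ) = 1 := by
    rw [← exp_conj, ← exp_add, map_mul, conj_I, conj_ofReal, neg_mul, neg_add_cancel, exp_zero]
  rw [map_mul]
  linear_combination (starRingEnd ℂ a * b) * h

variable {d : ℕ}

theorem pip_exp_I_mul (α : Dom d → ℝ) (f g : Dom d → ℂ) (k : ℕ) :
    pip d (fun x => exp (I * α x) * f x) (fun x => exp (I * α x) * g x) k = pip d f g k := by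
  simp only [pip, ← mul_pow, conj_exp_I_mul_mul_exp_I_mul]

theorem Kker_exp_I_mul (c : ℝ) (α : Dom d → ℝ) (f g : Dom d → ℂ) :
    Kker c d (fun x => exp (I * α x) * f x) (fun x => exp (I * α x) * g x) = Kker c d f g := by
  simp only [Kker, mul_assoc, conj_exp_I_mul_mul_exp_I_mul]

theorem Kker_eq_exp_tsum (c : ℝ) {f g : Dom d → ℂ} (hf : MemLp f 2 volume)
    (hg : MemLp g 2 volume) {r s : ℝ≥0} (hfr : ∀ᵐ x, ‖f x‖ ≤ r) (hgs : ∀ᵐ x, ‖g x‖ ≤ s)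
    (hrs : 4 * r * s < 1) :
    Kker c d f g = exp (c / 2 * ∑' n : ℕ, 4 ^ n * pip d f g n / n) := by
  rw [Kker, integral_log_one_sub_four_conj_mul_eq_neg_tsum hf hg hfr hgs hrs, neg_mul_neg]
  rfl

namespace MemA

theorem mul {f g : Dom d → ℂ} (hf : MemA d f) (hg : MemA d g) : MemA d (f * g) :=
  ⟨hg.1.mul hf.2, hg.2.mul hf.2⟩

theorem pow_succ {f : Dom d → ℂ} (hf : MemA d f) (k : ℕ) : MemA d (f ^ (k + 1)) := by
  induction k with
  | zero => simpa using hf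
  | succ k ih => rw [_root_.pow_succ]; exact ih.mul hf

theorem lintegral_enorm_pow_eq_pip {f : Dom d → ℂ} (hf : MemA d f) (k : ℕ) :
    ∫⁻ x, ‖f x‖ₑ ^ (2 * k + 2) = ENNReal.ofReal (pip d f f (k + 1)).re := by
  simp_rw [pip, ← map_pow]
  rw [← lintegral_enorm_sq_eq_ofReal_re_integral (u := fun x => f x ^ (k + 1)) (hf.pow_succ k).1]
  refine lintegral_congr fun x => ?_
  rw [enorm_pow, ← pow_mul]
  ring_nf

end MemA

namespace IsStarEndo

variable {T₁ : (Dom d → ℂ) → (Dom d → ℂ)}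

theorem map_pow_succ (hT₁ : IsStarEndo d T₁) {f : Dom d → ℂ} (hf : MemA d f) (k : ℕ) :
    T₁ (f ^ (k + 1)) =ᵐ[volume] T₁ f ^ (k + 1) := by
  induction k with
  | zero => simp only [zero_add, pow_one]; rfl
  | succ k ih =>
    rw [pow_succ, pow_succ (T₁ f)]
    exact (hT₁.mul _ _ (hf.pow_succ k) hf).trans (ih.mul Filter.EventuallyEq.rfl)

theorem pip_map (hT₁ : IsStarEndo d T₁) {f g : Dom d → ℂ} (hf : MemA d f) (hg : MemA d g)
    (k : ℕ) :
    pip d (T₁ f) (T₁ g) k = pip d f g k := by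
  cases k with
  | zero => simp [pip]
  | succ k =>
    calc pip d (T₁ f) (T₁ g) (k + 1)
        = ∫ x, starRingEnd ℂ (T₁ (f ^ (k + 1)) x) * T₁ (g ^ (k + 1)) x := by
          refine integral_congr_ae ?_
          filter_upwards [hT₁.map_pow_succ hf k, hT₁.map_pow_succ hg k] with x hfx hgx
          simp [hfx, hgx]
      _ = ∫ x, starRingEnd ℂ ((f ^ (k + 1)) x) * (g ^ (k + 1)) x :=
          hT₁.inner _ _ (hf.pow_succ k) (hg.pow_succ k)
      _ = pip d f g (k + 1) := by simp [pip]

theorem eLpNorm_top_map_le (hT₁ : IsStarEndo d T₁) {f : Dom d → ℂ} (hf : MemA d f) :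
    eLpNorm (T₁ f) ⊤ volume ≤ eLpNorm f ⊤ volume := by
  have hTf := hT₁.mem f hf
  refine eLpNorm_top_le_of_lintegral_pow_le hTf.1.1 two_ne_zero ?_ fun k => ?_
  · rw [lintegral_enorm_sq_eq_ofReal_re_integral hf.1]
    exact ENNReal.ofReal_ne_top
  · rw [hTf.lintegral_enorm_pow_eq_pip, hf.lintegral_enorm_pow_eq_pip, hT₁.pip_map hf hf]

end IsStarEndo

theorem statement8_general (d : ℕ) (c : ℝ)
    (α : Dom d → ℝ)
    (T₁ : (Dom d → ℂ) → (Dom d → ℂ)) (hT₁ : IsStarEndo d T₁)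
    (T : (Dom d → ℂ) → (Dom d → ℂ))
    (hT : T = fun f x => Complex.exp (Complex.I * α x) * T₁ f x) :
    (∀ k : ℕ, 1 ≤ k → ∀ f g, MemA d f → MemA d g →
      pip d (T f) (T g) k = pip d f g k) ∧
    (∀ n : ℕ, ∀ f g, MemA d f → MemA d g →
      Sker c d (T f) (T g) n = Sker c d f g n) ∧
    (∀ f g, MemA d f → MemA d g →
      eLpNorm f ⊤ (volume : Measure (Dom d)) < 1 / 2 →
      eLpNorm g ⊤ (volume : Measure (Dom d)) < 1 / 2 →
      Kker c d (T f) (T g) = Kker c d f g) := by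
  have hpip : ∀ k f g, MemA d f → MemA d g → pip d (T f) (T g) k = pip d f g k := by
    intro k f g hf hg
    rw [hT, pip_exp_I_mul, hT₁.pip_map hf hg]
  refine ⟨fun k _ => hpip k, fun n f g hf hg => by simp only [Sker, hpip _ f g hf hg], ?_⟩
  intro f g hf hg hf₂ hg₂
  obtain ⟨r, hfr, hr⟩ := ENNReal.lt_iff_exists_coe.1 hf₂
  obtain ⟨s, hgs, hs⟩ := ENNReal.lt_iff_exists_coe.1 hg₂
  have hrs : 4 * r * s < 1 := by
    replace hr : r < 1 / 2 := by simpa [← ENNReal.coe_lt_coe] using hr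
    replace hs : s < 1 / 2 := by simpa [← ENNReal.coe_lt_coe] using hs
    calc 4 * r * s ≤ 4 * r * (1 / 2) := by gcongr
      _ < 4 * (1 / 2) * (1 / 2) := by gcongr
      _ = 1 := by norm_num
  rw [hT, Kker_exp_I_mul,
    Kker_eq_exp_tsum c (hT₁.mem f hf).1 (hT₁.mem g hg).1
      (ae_norm_le_of_eLpNorm_top_le ((hT₁.eLpNorm_top_map_le hf).trans hfr.le))
      (ae_norm_le_of_eLpNorm_top_le ((hT₁.eLpNorm_top_map_le hg).trans hgs.le)) hrs,
    Kker_eq_exp_tsum c hf.1 hg.1 (ae_norm_le_of_eLpNorm_top_le hfr.le)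
      (ae_norm_le_of_eLpNorm_top_le hgs.le) hrs]
  simp_rw [hT₁.pip_map hf hg]

/-- Proposition 6 of the paper: if `T = e^{iα} T₁` with `α` real Borel and
`T₁` a `*`-endomorphism of `𝒜`, then `T` preserves all power inner products, hence all the
kernels `S_n` and `K`; i.e. `Γ₂(T)` is an isometry of the quadratic Fock space. -/
theorem statement8 (d : ℕ) (hd : 1 ≤ d) (c : ℝ) (hc : 0 < c)
    (α : Dom d → ℝ) (hα : Measurable α)
    (T₁ : (Dom d → ℂ) → (Dom d → ℂ)) (hT₁ : IsStarEndo d T₁)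
    (T : (Dom d → ℂ) → (Dom d → ℂ))
    (hT : T = fun f x => Complex.exp (Complex.I * α x) * T₁ f x) :
    (∀ k : ℕ, 1 ≤ k → ∀ f g, MemA d f → MemA d g →
      pip d (T f) (T g) k = pip d f g k) ∧
    (∀ n : ℕ, ∀ f g, MemA d f → MemA d g →
      Sker c d (T f) (T g) n = Sker c d f g n) ∧
    (∀ f g, MemA d f → MemA d g →
      eLpNorm f ⊤ (volume : Measure (Dom d)) < 1 / 2 →
      eLpNorm g ⊤ (volume : Measure (Dom d)) < 1 / 2 →
      Kker c d (T f) (T g) = Kker c d f g) :=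
  statement8_general d c α T₁ hT₁ T hT
end
end

section
/- Let T: 𝒜 → 𝒜 be a linear map which preserves power inner products, and for a measurable set I ⊆ ℝ^d of finite Lebesgue measure let τ(I) := {x ∈ ℝ^d : (Tχ_I)(x) ≠ 0}, where χ_I is the indicator of I. If I₁, I₂ ⊆ ℝ^d are measurable sets of finite Lebesgue measure with |I₁ ∩ I₂| = 0, then |τ(I₁) ∩ τ(I₂)| = 0. -/
open MeasureTheory Complex Finset
open scoped Nat ENNReal

noncomputable section

/-- The indicator function `χ_I` of a set `I ⊆ ℝ^d`, as an element of `𝒜`. -/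
def chi (d : ℕ) (I : Set (Dom d)) : Dom d → ℂ := I.indicator 1

/-- `τ(I) = {x : (Tχ_I)(x) ≠ 0}`, the support of `Tχ_I`. -/
def tau (d : ℕ) (T : (Dom d → ℂ) → (Dom d → ℂ)) (I : Set (Dom d)) : Set (Dom d) :=
  {x | T (chi d I) x ≠ 0}

/-
The real inner product space identity
  ‖u + v‖⁴ + ‖u - v‖⁴ - 2‖u‖⁴ - 2‖v‖⁴ = 4‖u‖²‖v‖² + 8⟪u, v⟫²
shows that the integrand on the left is nonnegative and vanishes exactly where `u = 0` or
`v = 0`. Hence, for `u v ∈ L⁴`, the quartic parallelogram law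
  ∫ ‖u + v‖⁴ + ∫ ‖u - v‖⁴ = 2 ∫ ‖u‖⁴ + 2 ∫ ‖v‖⁴
holds iff `u` and `v` have a.e. disjoint supports. Both sides involve only fourth moments, which
`T` preserves (`⟨h², h²⟩ = ∫ |h|⁴`), and `T` is additive up to null sets, so the law passes from
`χ_{I₁}, χ_{I₂}` to `Tχ_{I₁}, Tχ_{I₂}`.
-/

open scoped RealInnerProductSpace

lemma MeasureTheory.MemLp.memLp_four {α E : Type*} [MeasurableSpace α] {μ : Measure α}
    [NormedAddCommGroup E] {f : α → E} (h2 : MemLp f 2 μ) (htop : MemLp f ∞ μ) :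
    MemLp f 4 μ := by
  have : MemLp (fun x => ‖f x‖ * ‖f x‖) 2 μ := htop.norm.mul h2.norm
  rw [← integrable_norm_rpow_iff h2.1 (by norm_num) (by norm_num)]
  simpa [norm_mul, ← pow_two, ← pow_mul] using this.integrable_norm_pow two_ne_zero

section Quartic

variable {E : Type*} [NormedAddCommGroup E] [InnerProductSpace ℝ E]

lemma four_mul_sq_mul_sq_le (u v : E) :
    4 * (‖u‖ ^ 2 * ‖v‖ ^ 2) ≤ (‖u + v‖ ^ 4 + ‖u - v‖ ^ 4) - (2 * ‖u‖ ^ 4 + 2 * ‖v‖ ^ 4) := by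
  have h : ∀ w : E, ‖w‖ ^ 4 = (‖w‖ ^ 2) ^ 2 := fun w => by ring
  rw [h (u + v), h (u - v), norm_add_sq_real, norm_sub_sq_real]
  nlinarith [sq_nonneg ⟪u, v⟫]

lemma norm_add_pow_four_add_norm_sub_pow_four_eq_iff (u v : E) :
    ‖u + v‖ ^ 4 + ‖u - v‖ ^ 4 = 2 * ‖u‖ ^ 4 + 2 * ‖v‖ ^ 4 ↔ u = 0 ∨ v = 0 := by
  constructor
  · intro h
    have hle := four_mul_sq_mul_sq_le u v
    have : ‖u‖ ^ 2 * ‖v‖ ^ 2 = 0 := le_antisymm (by linarith) (by positivity)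
    simpa using this
  · rintro (rfl | rfl) <;> simp <;> ring

variable {α : Type*} [MeasurableSpace α] {μ : Measure α}

theorem integral_norm_add_pow_four_add_integral_norm_sub_pow_four_eq_iff
    {u v : α → E} (hu : MemLp u 4 μ) (hv : MemLp v 4 μ) :
    ∫ x, ‖u x + v x‖ ^ 4 ∂μ + ∫ x, ‖u x - v x‖ ^ 4 ∂μ
        = 2 * ∫ x, ‖u x‖ ^ 4 ∂μ + 2 * ∫ x, ‖v x‖ ^ 4 ∂μ ↔
      ∀ᵐ x ∂μ, u x = 0 ∨ v x = 0 := by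
  have hint : ∀ {w : α → E}, MemLp w 4 μ → Integrable (fun x => ‖w x‖ ^ 4) μ :=
    fun hw => hw.integrable_norm_pow (p := 4) (by norm_num)
  have hadd : Integrable (fun x => ‖u x + v x‖ ^ 4) μ := hint (hu.add hv)
  have hsub : Integrable (fun x => ‖u x - v x‖ ^ 4) μ := hint (hu.sub hv)
  have hu4 := (hint hu).const_mul 2
  have hv4 := (hint hv).const_mul 2
  set D : α → ℝ := fun x =>
    (‖u x + v x‖ ^ 4 + ‖u x - v x‖ ^ 4) - (2 * ‖u x‖ ^ 4 + 2 * ‖v x‖ ^ 4)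
  have hD : Integrable D μ := (hadd.add hsub).sub (hu4.add hv4)
  have hD_nonneg : 0 ≤ D := fun x =>
    (by positivity : (0:ℝ) ≤ 4 * (‖u x‖ ^ 2 * ‖v x‖ ^ 2)).trans (four_mul_sq_mul_sq_le _ _)
  have hD_integral : ∫ x, D x ∂μ = (∫ x, ‖u x + v x‖ ^ 4 ∂μ + ∫ x, ‖u x - v x‖ ^ 4 ∂μ)
      - (2 * ∫ x, ‖u x‖ ^ 4 ∂μ + 2 * ∫ x, ‖v x‖ ^ 4 ∂μ) := by
    simp only [D]
    rw [integral_sub, integral_add hadd hsub, integral_add hu4 hv4, integral_const_mul,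
      integral_const_mul]
    exacts [hadd.add hsub, hu4.add hv4]
  rw [← sub_eq_zero, ← hD_integral, integral_eq_zero_iff_of_nonneg hD_nonneg hD]
  refine Filter.eventually_congr (.of_forall fun x => ?_)
  simp only [D, Pi.zero_apply, sub_eq_zero, norm_add_pow_four_add_norm_sub_pow_four_eq_iff]

end Quartic

namespace MemA

variable {d : ℕ} {f g : Dom d → ℂ}

lemma add (hf : MemA d f) (hg : MemA d g) : MemA d (f + g) := ⟨hf.1.add hg.1, hf.2.add hg.2⟩

lemma const_smul (a : ℂ) (hf : MemA d f) : MemA d (a • f) :=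
  ⟨hf.1.const_smul a, hf.2.const_smul a⟩

lemma sub (hf : MemA d f) (hg : MemA d g) : MemA d (f - g) := ⟨hf.1.sub hg.1, hf.2.sub hg.2⟩

lemma memLp_four (hf : MemA d f) : MemLp f 4 volume := hf.1.memLp_four hf.2

end MemA

lemma memA_chi {d : ℕ} {I : Set (Dom d)} (hI : MeasurableSet I) (hI_fin : volume I < ⊤) :
    MemA d (chi d I) :=
  ⟨memLp_indicator_const _ hI 1 (Or.inr hI_fin.ne),
    memLp_indicator_const _ hI 1 (Or.inr hI_fin.ne)⟩

lemma ae_chi_eq_zero_or_chi_eq_zero {d : ℕ} {I₁ I₂ : Set (Dom d)} (h : volume (I₁ ∩ I₂) = 0) :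
    ∀ᵐ x, chi d I₁ x = 0 ∨ chi d I₂ x = 0 := by
  filter_upwards [measure_eq_zero_iff_ae_notMem.1 h] with x hx
  by_cases hx₁ : x ∈ I₁
  · exact Or.inr (Set.indicator_of_notMem (fun hx₂ => hx ⟨hx₁, hx₂⟩) _)
  · exact Or.inl (Set.indicator_of_notMem hx₁ _)

lemma pip_self_two {d : ℕ} (h : Dom d → ℂ) : pip d h h 2 = ((∫ x, ‖h x‖ ^ 4 : ℝ) : ℂ) := by
  rw [pip, ← integral_complex_ofReal]
  congr 1 with x
  rw [← mul_pow, ← Complex.normSq_eq_conj_mul_self, Complex.normSq_eq_norm_sq]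
  push_cast
  ring

lemma ae_map_sub {d : ℕ} {T : (Dom d → ℂ) → (Dom d → ℂ)}
    (hTadd : ∀ f g, MemA d f → MemA d g → T (f + g) =ᵐ[volume] T f + T g)
    (hTsmul : ∀ (a : ℂ) (f : Dom d → ℂ), MemA d f → T (a • f) =ᵐ[volume] a • T f)
    {f g : Dom d → ℂ} (hf : MemA d f) (hg : MemA d g) :
    T (f - g) =ᵐ[volume] T f - T g := by
  have h : f - g = f + (-1 : ℂ) • g := by rw [neg_one_smul, sub_eq_add_neg]
  filter_upwards [hTadd f _ hf (hg.const_smul (-1)), hTsmul (-1) g hg] with x hadd hsmul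
  rw [h, hadd, Pi.add_apply, hsmul]
  simp [sub_eq_add_neg]

theorem statement12_general (d : ℕ)
    (T : (Dom d → ℂ) → (Dom d → ℂ))
    (hTmem : ∀ f, MemA d f → MemA d (T f))
    (hTadd : ∀ f g, MemA d f → MemA d g →
      T (f + g) =ᵐ[(volume : Measure (Dom d))] T f + T g)
    (hTsmul : ∀ (a : ℂ) (f : Dom d → ℂ), MemA d f →
      T (a • f) =ᵐ[(volume : Measure (Dom d))] a • T f)
    (hppip : ∀ k : ℕ, 1 ≤ k → ∀ f g, MemA d f → MemA d g →
      pip d (T f) (T g) k = pip d f g k)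
    (I₁ I₂ : Set (Dom d)) (hI₁ : MeasurableSet I₁) (hI₂ : MeasurableSet I₂)
    (hI₁fin : volume I₁ < ⊤) (hI₂fin : volume I₂ < ⊤)
    (hdisj : volume (I₁ ∩ I₂) = 0) :
    volume (tau d T I₁ ∩ tau d T I₂) = 0 := by
  set f := chi d I₁
  set g := chi d I₂
  have hf : MemA d f := memA_chi hI₁ hI₁fin
  have hg : MemA d g := memA_chi hI₂ hI₂fin
  have hT4 : ∀ h, MemA d h → ∫ x, ‖T h x‖ ^ 4 = ∫ x, ‖h x‖ ^ 4 := fun h hh => by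
    have := hppip 2 one_le_two h h hh hh
    rwa [pip_self_two, pip_self_two, Complex.ofReal_inj] at this
  have hT4_add : ∫ x, ‖T f x + T g x‖ ^ 4 = ∫ x, ‖f x + g x‖ ^ 4 :=
    (integral_congr_ae ((hTadd f g hf hg).fun_comp (‖·‖ ^ 4))).symm.trans (hT4 _ (hf.add hg))
  have hT4_sub : ∫ x, ‖T f x - T g x‖ ^ 4 = ∫ x, ‖f x - g x‖ ^ 4 :=
    (integral_congr_ae ((ae_map_sub hTadd hTsmul hf hg).fun_comp (‖·‖ ^ 4))).symm.trans
      (hT4 _ (hf.sub hg))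
  have hTfg : ∀ᵐ x, T f x = 0 ∨ T g x = 0 := by
    rw [← integral_norm_add_pow_four_add_integral_norm_sub_pow_four_eq_iff
      (hTmem f hf).memLp_four (hTmem g hg).memLp_four, hT4_add, hT4_sub, hT4 f hf, hT4 g hg,
      integral_norm_add_pow_four_add_integral_norm_sub_pow_four_eq_iff hf.memLp_four
      hg.memLp_four]
    exact ae_chi_eq_zero_or_chi_eq_zero hdisj
  rw [ae_iff] at hTfg
  convert hTfg using 2
  ext x
  simp [tau, f, g, not_or]

/-- Lemma 11 of the paper: if the linear map `T : 𝒜 → 𝒜` preserves power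
inner products and `I₁, I₂` are measurable sets of finite measure with `|I₁ ∩ I₂| = 0`,
then `|τ(I₁) ∩ τ(I₂)| = 0`. -/
theorem statement12 (d : ℕ) (hd : 1 ≤ d)
    (T : (Dom d → ℂ) → (Dom d → ℂ))
    (hTmem : ∀ f, MemA d f → MemA d (T f))
    (hTae : ∀ f g, MemA d f → MemA d g → f =ᵐ[(volume : Measure (Dom d))] g →
      T f =ᵐ[(volume : Measure (Dom d))] T g)
    (hTadd : ∀ f g, MemA d f → MemA d g →
      T (f + g) =ᵐ[(volume : Measure (Dom d))] T f + T g)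
    (hTsmul : ∀ (a : ℂ) (f : Dom d → ℂ), MemA d f →
      T (a • f) =ᵐ[(volume : Measure (Dom d))] a • T f)
    (hppip : ∀ k : ℕ, 1 ≤ k → ∀ f g, MemA d f → MemA d g →
      pip d (T f) (T g) k = pip d f g k)
    (I₁ I₂ : Set (Dom d)) (hI₁ : MeasurableSet I₁) (hI₂ : MeasurableSet I₂)
    (hI₁fin : volume I₁ < ⊤) (hI₂fin : volume I₂ < ⊤)
    (hdisj : volume (I₁ ∩ I₂) = 0) :
    volume (tau d T I₁ ∩ tau d T I₂) = 0 :=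
  statement12_general d T hTmem hTadd hTsmul hppip I₁ I₂ hI₁ hI₂ hI₁fin hI₂fin hdisj
end
end
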